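/- Let D be an integral domain with quotient field K, T an overring of D, ⋆ a semistar operation on D and ⋆' a semistar operation on T. The following are equivalent: (i) T is (⋆,⋆')-flat over D; (ii) T is (⋆,⋆')-linked to D and, for each prime ideal P of D, either (PT)^{⋆'_f} = T^{⋆'} or T ⊆ D_P; (iii) T is (⋆,⋆')-linked to D and, for each nonzero x ∈ T, ((D :_D xD)·T)^{⋆'_f} = T^{⋆'}; (iv) T is (⋆,⋆')-linked to D and T^{⋆̃'} = ∩{D_{Q∩D} : Q ∈ M(⋆'_f)}. -/

import Mathlib

open Pointwise

/-! Basic framework for semistar operations on an integral domain `D`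
with quotient field `K`. Submodules of `K` play the role of the
`D`-submodules of the quotient field. -/

section Generic

variable (R : Type*) (K : Type*) [CommRing R] [Field K] [Algebra R K]

/-- A semistar operation on `R` (with ambient field `K`): a map on the nonzero
`R`-submodules of `K` satisfying (⋆₁), (⋆₂), (⋆₃). The map is total on
`Submodule R K`, but the axioms are only imposed on nonzero submodules. -/
structure SemistarOp where
  toFun : Submodule R K → Submodule R K
  smul' : ∀ x : K, x ≠ 0 → ∀ E : Submodule R K, E ≠ ⊥ → toFun (x • E) = x • toFun E
  mono' : ∀ E F : Submodule R K, E ≠ ⊥ → F ≠ ⊥ → E ≤ F → toFun E ≤ toFun F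
  le_star' : ∀ E : Submodule R K, E ≠ ⊥ → E ≤ toFun E
  idem' : ∀ E : Submodule R K, E ≠ ⊥ → toFun (toFun E) = toFun E

variable {R K}

/-- The `R`-submodule of `K` generated by (the image of) an ideal of `R`. -/
def idealSub (I : Ideal R) : Submodule R K := Submodule.map (Algebra.linearMap R K) I

/-- The finite-type operation `⋆_f` associated to (the function underlying) a semistar
operation: `E^{⋆_f} = ∪ { F^⋆ : F nonzero finitely generated, F ⊆ E }`. -/
def starF (f : Submodule R K → Submodule R K) (E : Submodule R K) : Submodule R K :=
  sSup {G | ∃ F : Submodule R K, F.FG ∧ F ≠ ⊥ ∧ F ≤ E ∧ G = f F}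

/-- `I` is a quasi-⋆-ideal: `I ≠ 0` and `I^⋆ ∩ R = I`. -/
def QuasiIdeal (f : Submodule R K → Submodule R K) (I : Ideal R) : Prop :=
  I ≠ ⊥ ∧ Submodule.comap (Algebra.linearMap R K) (f (idealSub I)) = I

/-- `I` is a quasi-⋆-prime: a prime quasi-⋆-ideal. -/
def QuasiPrime (f : Submodule R K → Submodule R K) (I : Ideal R) : Prop :=
  QuasiIdeal f I ∧ I.IsPrime

/-- `I` is a quasi-⋆-maximal: maximal among proper quasi-⋆-ideals. -/
def QuasiMax (f : Submodule R K → Submodule R K) (I : Ideal R) : Prop :=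
  QuasiIdeal f I ∧ I ≠ ⊤ ∧ ∀ J : Ideal R, QuasiIdeal f J → J ≠ ⊤ → I ≤ J → I = J

/-- The localization `E·R_Q` of a submodule `E` of `K` at (the complement of) `Q`:
for prime `Q` this is `{x ∈ K : s·x ∈ E for some s ∉ Q}`. -/
def locSub (Q : Ideal R) (E : Submodule R K) : Submodule R K :=
  Submodule.span R {x : K | ∃ s : R, s ∉ Q ∧ algebraMap R K s * x ∈ E}

/-- The spectral semistar operation `⋆̃` associated to `⋆`:
`E^{⋆̃} = ∩ { E R_Q : Q quasi-⋆_f-maximal }` (equal to `K` if there are none). -/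
def tildeOp (f : Submodule R K → Submodule R K) (E : Submodule R K) : Submodule R K :=
  ⨅ (Q : Ideal R) (_ : QuasiMax (starF f) Q), locSub Q E

/-- The `v`-operation `E ↦ (R :_K (R :_K E))`. -/
def vOp (E : Submodule R K) : Submodule R K := 1 / (1 / E)

/-- The `t`-operation: the finite-type operation associated to `v`. -/
def tOp : Submodule R K → Submodule R K := starF (vOp (R := R) (K := K))

/-- `R` is a Prüfer ⋆-multiplication domain: every nonzero finitely generated ideal `F`
is ⋆_f-invertible, i.e. `(F·(R :_K F))^{⋆_f} = R^⋆`. -/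
def PSMD (f : Submodule R K → Submodule R K) : Prop :=
  ∀ F : Ideal R, F ≠ ⊥ → F.FG →
    starF f (idealSub F * ((1 : Submodule R K) / idealSub F)) = f 1

/-- The content ideal of a polynomial: the ideal generated by its coefficients. -/
def contentI (h : Polynomial R) : Ideal R := Ideal.span (Set.range h.coeff)

/-- The Nagata ring `Na(R,⋆) = R[X]_{N(⋆)}`, realized as the subset
`{g/h : g, h ∈ R[X], h ≠ 0, c(h)^⋆ = R^⋆}` of the field `K(X)` of rational functions. -/
def NaSet (f : Submodule R K → Submodule R K) : Set (RatFunc K) :=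
  {x | ∃ g h : Polynomial R, h ≠ 0 ∧ f (idealSub (contentI h)) = f 1 ∧
    x * algebraMap (Polynomial K) (RatFunc K) (h.map (algebraMap R K)) =
      algebraMap (Polynomial K) (RatFunc K) (g.map (algebraMap R K))}

/-- The Nagata ring as a subring of `K(X)` (the set `NaSet` is multiplicatively
saturated, so it coincides with the subring it generates). -/
noncomputable def NaSub (f : Submodule R K → Submodule R K) : Subring (RatFunc K) :=
  Subring.closure (NaSet f)

/-- A subset `S` of `K` is integrally closed (in `K`) if every element of `K` which is a root
of a monic polynomial with coefficients in `S` lies in `S`. -/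
def IntClosedSet (S : Set K) : Prop :=
  ∀ x : K, (∃ p : Polynomial K, p.Monic ∧ (∀ n, p.coeff n ∈ S) ∧ p.eval x = 0) → x ∈ S

/-- A subset `S` of `K` is seminormal if `x² ∈ S` and `x³ ∈ S` imply `x ∈ S`. -/
def SeminormalSet (S : Set K) : Prop := ∀ x : K, x ^ 2 ∈ S → x ^ 3 ∈ S → x ∈ S

/-- `T` is `(f,g)`-linked to `T` (case `D = T` of linkedness). -/
def LinkedSelf (f g : Submodule R K → Submodule R K) : Prop :=
  ∀ G : Ideal R, G ≠ ⊥ → G.FG → f (idealSub G) = f 1 → g (idealSub G) = g 1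

end Generic

section Overring

variable {D : Type*} {K : Type*} [CommRing D] [Field K] [Algebra D K]

/-- The `T`-submodule `E·T` of `K` generated by a `D`-submodule `E` of `K`. -/
def extT (T : Subalgebra D K) (E : Submodule D K) : Submodule ↥T K :=
  Submodule.span ↥T (E : Set K)

/-- `T` is `(⋆,⋆')`-linked to `D`: for every nonzero finitely generated integral ideal `F`
of `D`, `F^⋆ = D^⋆` implies `(FT)^{⋆'} = T^{⋆'}`. -/
def LinkedF (f : Submodule D K → Submodule D K) (T : Subalgebra D K)
    (g : Submodule ↥T K → Submodule ↥T K) : Prop :=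
  ∀ F : Ideal D, F ≠ ⊥ → F.FG → f (idealSub F) = f 1 → g (extT T (idealSub F)) = g 1

/-- `T` is `t`-linked to `(D,⋆)`: `T` is `(⋆, t_T)`-linked to `D`. -/
def TLinked (f : Submodule D K → Submodule D K) (T : Subalgebra D K) : Prop :=
  LinkedF f T (tOp (R := ↥T) (K := K))

/-- The semistar operation `ℓ_{⋆,T}` on `T`:
`E^ℓ = ∩ { E T_{D∖P} : P quasi-⋆_f-prime of D }` (equal to `K` if there are none). -/
def ellOp (f : Submodule D K → Submodule D K) (T : Subalgebra D K)
    (E : Submodule ↥T K) : Submodule ↥T K :=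
  ⨅ (P : Ideal D) (_ : QuasiPrime (starF f) P),
    Submodule.span ↥T {x : K | ∃ r : D, r ∉ P ∧ algebraMap D K r * x ∈ E}

/-- The localization `D_P` of `D` at a prime `P`, as a subalgebra of `K`. -/
def Dloc (P : Ideal D) : Subalgebra D K :=
  Algebra.adjoin D {x : K | ∃ r : D, r ∉ P ∧ algebraMap D K r * x ∈ (⊥ : Subalgebra D K)}

/-- The localization `T_{D∖P}` of an overring `T` at the multiplicative set `D∖P`,
as a subalgebra of `K`. -/
def TlocD (T : Subalgebra D K) (P : Ideal D) : Subalgebra D K :=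
  Algebra.adjoin D {x : K | ∃ r : D, r ∉ P ∧ algebraMap D K r * x ∈ T}

/-- The localization `T_Q` of an overring `T` at a prime `Q` of `T`,
as a subalgebra of `K`. -/
def TlocQ (T : Subalgebra D K) (Q : Ideal ↥T) : Subalgebra D K :=
  Algebra.adjoin D {x : K | ∃ t : ↥T, t ∉ Q ∧ (t : K) * x ∈ T}

/-- `T` is `(⋆,⋆')`-flat over `D`: `T` is `(⋆,⋆')`-linked to `D` and `D_{Q∩D} = T_Q`
for every quasi-⋆'_f-prime `Q` of `T`. -/
def FlatF (f : Submodule D K → Submodule D K) (T : Subalgebra D K)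
    (g : Submodule ↥T K → Submodule ↥T K) : Prop :=
  LinkedF f T g ∧
    ∀ Q : Ideal ↥T, QuasiPrime (starF g) Q →
      Dloc (Q.comap (algebraMap D ↥T)) = TlocQ T Q

/-- `B` is a flat `A`-module (for subalgebras `A ⊆ B` of `K`, with the module structure
coming from the inclusion). -/
def FlatPair (A B : Subalgebra D K) : Prop :=
  ∃ h : A ≤ B, @Module.Flat ↥A ↥B _ _ ((Subalgebra.inclusion h).toRingHom.toModule)

/-- `B` is a flat `A`-module, for subrings `A ⊆ B` of a commutative ring. -/
def FlatSubring {L : Type*} [CommRing L] (A B : Subring L) : Prop :=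
  ∃ h : A ≤ B, @Module.Flat ↥A ↥B _ _ ((Subring.inclusion h).toModule)

end Overring

/-!
The pivot is a description of the ideals `J` of `T` with `J^{⋆'_f} = T^{⋆'}`: a nonzero `J`
has this property iff it lies in no quasi-`⋆'_f`-maximal ideal. Indeed `⋆'_f` is of finite type,
so Zorn's lemma puts every other nonzero ideal below a quasi-`⋆'_f`-maximal one, and these are
prime. On the side of `D`, `x ∈ D_P` iff the ideal `(D :_D xD)` of denominators of `x` is not
contained in `P`, and for a prime `Q` of `T` one has `D_{Q∩D} = T_Q` as soon as `T ⊆ D_{Q∩D}`.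
So flatness says `T ⊆ D_{Q∩D}` for every quasi-`⋆'_f`-prime `Q`, and (ii), (iii), (iv) express
the same through the quasi-`⋆'_f`-maximal ideals: via the primes of `D` below them, via the
denominators of the elements of `T`, and via the intersection of the localizations.
-/

theorem Submodule.one_ne_bot {S A : Type*} [CommSemiring S] [Semiring A] [Algebra S A]
    [Nontrivial A] : (1 : Submodule S A) ≠ ⊥ :=
  fun h => one_ne_zero ((Submodule.mem_bot S).1 (h ▸ Submodule.one_le.1 le_rfl))

section FiniteType

variable {R K : Type*} [CommRing R] [Field K] [Algebra R K]

theorem starF_mono (f : Submodule R K → Submodule R K) {E E' : Submodule R K} (h : E ≤ E') :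
    starF f E ≤ starF f E' :=
  sSup_le_sSup fun _ ⟨F, hF, hF0, hle, hG⟩ => ⟨F, hF, hF0, hle.trans h, hG⟩

theorem apply_le_starF (f : Submodule R K → Submodule R K) {E F : Submodule R K}
    (hF : F.FG) (hF0 : F ≠ ⊥) (hle : F ≤ E) : f F ≤ starF f E :=
  le_sSup ⟨F, hF, hF0, hle, rfl⟩

namespace SemistarOp

variable (s : SemistarOp R K)

theorem apply_ne_bot {E : Submodule R K} (hE : E ≠ ⊥) : s.toFun E ≠ ⊥ :=
  fun h => hE (le_bot_iff.1 (h ▸ s.le_star' E hE))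

theorem one_mem_apply_one : (1 : K) ∈ s.toFun 1 :=
  s.le_star' 1 Submodule.one_ne_bot (Submodule.one_le.1 le_rfl)

theorem directedOn_starF_generators (E : Submodule R K) :
    DirectedOn (· ≤ ·) {G | ∃ F : Submodule R K, F.FG ∧ F ≠ ⊥ ∧ F ≤ E ∧ G = s.toFun F} := by
  rintro _ ⟨F₁, hF₁, hF₁0, hle₁, rfl⟩ _ ⟨F₂, hF₂, hF₂0, hle₂, rfl⟩
  have hne : F₁ ⊔ F₂ ≠ ⊥ := by simp [hF₁0]
  exact ⟨_, ⟨F₁ ⊔ F₂, hF₁.sup hF₂, hne, sup_le hle₁ hle₂, rfl⟩,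
    s.mono' _ _ hF₁0 hne le_sup_left, s.mono' _ _ hF₂0 hne le_sup_right⟩

/-- The `G^⋆` with `G ⊆ E` finitely generated form a directed family whose union is `E^{⋆_f}`,
and finitely generated submodules are compact elements of the lattice of submodules. -/
theorem exists_fg_le_apply_of_le_starF {E F : Submodule R K} (hE : E ≠ ⊥) (hF : F.FG)
    (hle : F ≤ starF s.toFun E) :
    ∃ G : Submodule R K, G.FG ∧ G ≠ ⊥ ∧ G ≤ E ∧ F ≤ s.toFun G := by
  obtain ⟨x, hx, hx0⟩ := (Submodule.ne_bot_iff E).1 hE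
  have hx0' : Submodule.span R {x} ≠ ⊥ := by simpa using hx0
  have hne : {G | ∃ F : Submodule R K, F.FG ∧ F ≠ ⊥ ∧ F ≤ E ∧ G = s.toFun F}.Nonempty :=
    ⟨_, _, Submodule.fg_span_singleton x, hx0', (Submodule.span_singleton_le_iff_mem x E).2 hx,
      rfl⟩
  obtain ⟨_, ⟨G, hG, hG0, hGE, rfl⟩, hFG⟩ :=
    (CompleteLattice.isCompactElement_iff_le_of_directed_sSup_le (k := F)).1
      ((Submodule.fg_iff_compact F).1 hF) _ hne (s.directedOn_starF_generators E) hle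
  exact ⟨G, hG, hG0, hGE, hFG⟩

theorem exists_fg_mem_apply_of_mem_starF {E : Submodule R K} (hE : E ≠ ⊥) {x : K}
    (hx : x ∈ starF s.toFun E) :
    ∃ G : Submodule R K, G.FG ∧ G ≠ ⊥ ∧ G ≤ E ∧ x ∈ s.toFun G := by
  simpa only [Submodule.span_singleton_le_iff_mem] using
    s.exists_fg_le_apply_of_le_starF hE (Submodule.fg_span_singleton x)
      ((Submodule.span_singleton_le_iff_mem x _).2 hx)

theorem le_starF (E : Submodule R K) : E ≤ starF s.toFun E := by
  intro x hx
  rcases eq_or_ne x 0 with rfl | hx0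
  · exact zero_mem _
  have hx0' : Submodule.span R {x} ≠ ⊥ := by simpa using hx0
  exact apply_le_starF _ (Submodule.fg_span_singleton x) hx0'
    ((Submodule.span_singleton_le_iff_mem x E).2 hx)
    (s.le_star' _ hx0' (Submodule.mem_span_singleton_self x))

theorem starF_le_apply {E : Submodule R K} (hE : E ≠ ⊥) : starF s.toFun E ≤ s.toFun E :=
  sSup_le fun _ ⟨F, _, hF0, hle, hG⟩ => hG ▸ s.mono' F E hF0 hE hle

theorem starF_one : starF s.toFun 1 = s.toFun 1 :=
  le_antisymm (s.starF_le_apply Submodule.one_ne_bot)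
    (apply_le_starF _ ⟨{1}, by simp [Submodule.one_eq_span]⟩ Submodule.one_ne_bot le_rfl)

theorem starF_le_apply_one {E : Submodule R K} (hE : E ≤ 1) : starF s.toFun E ≤ s.toFun 1 :=
  (starF_mono _ hE).trans s.starF_one.le

theorem starF_starF {E : Submodule R K} (hE : E ≠ ⊥) :
    starF s.toFun (starF s.toFun E) = starF s.toFun E := by
  refine le_antisymm (sSup_le ?_) (s.le_starF _)
  rintro _ ⟨F, hF, hF0, hle, rfl⟩
  obtain ⟨G, hG, hG0, hGE, hFG⟩ := s.exists_fg_le_apply_of_le_starF hE hF hle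
  calc s.toFun F ≤ s.toFun (s.toFun G) := s.mono' _ _ hF0 (s.apply_ne_bot hG0) hFG
    _ = s.toFun G := s.idem' G hG0
    _ ≤ starF s.toFun E := apply_le_starF _ hG hG0 hGE

theorem starF_eq_apply_one_iff {E : Submodule R K} (hE : E ≤ 1) (hE0 : E ≠ ⊥) :
    starF s.toFun E = s.toFun 1 ↔ (1 : K) ∈ starF s.toFun E := by
  refine ⟨fun h => h ▸ s.one_mem_apply_one, fun h1 => le_antisymm (s.starF_le_apply_one hE) ?_⟩
  calc s.toFun 1 = starF s.toFun 1 := s.starF_one.symm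
    _ ≤ starF s.toFun (starF s.toFun E) := starF_mono _ (Submodule.one_le.2 h1)
    _ = starF s.toFun E := s.starF_starF hE0

theorem apply_mul_le {A : Submodule R K} (hA : A ≠ ⊥) (B : Submodule R K) :
    s.toFun A * B ≤ s.toFun (A * B) := by
  refine Submodule.mul_le.2 fun a ha b hb => ?_
  rcases eq_or_ne b 0 with rfl | hb0
  · simp
  have hbA : b • A ≤ A * B := by
    rintro _ ⟨y, hy, rfl⟩
    simpa [mul_comm b y] using Submodule.mul_mem_mul hy hb
  have hab : a * b ∈ s.toFun (b • A) := by
    rw [s.smul' b hb0 A hA, mul_comm]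
    exact Submodule.smul_mem_pointwise_smul a b _ ha
  have hAB : A * B ≠ ⊥ := by
    simp [Submodule.mul_eq_bot, hA, (Submodule.ne_bot_iff B).2 ⟨b, hb, hb0⟩]
  have hbA0 : b • A ≠ ⊥ := fun h => hA (by rw [← inv_smul_smul₀ hb0 A, h, Submodule.smul_bot'])
  exact s.mono' _ _ hbA0 hAB hbA hab

theorem apply_mul_apply_le {A B : Submodule R K} (hA : A ≠ ⊥) (hB : B ≠ ⊥) :
    s.toFun A * s.toFun B ≤ s.toFun (A * B) := by
  have hAB : A * B ≠ ⊥ := by simp [Submodule.mul_eq_bot, hA, hB]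
  calc s.toFun A * s.toFun B = s.toFun B * s.toFun A := mul_comm _ _
    _ ≤ s.toFun (B * s.toFun A) := s.apply_mul_le hB _
    _ ≤ s.toFun (s.toFun (A * B)) := by
        refine s.mono' _ _ (by simp [Submodule.mul_eq_bot, hB, s.apply_ne_bot hA])
          (s.apply_ne_bot hAB) ?_
        rw [mul_comm]
        exact s.apply_mul_le hA B
    _ = s.toFun (A * B) := s.idem' _ hAB

theorem starF_mul_starF_le {A B : Submodule R K} (hA : A ≠ ⊥) (hB : B ≠ ⊥) :
    starF s.toFun A * starF s.toFun B ≤ starF s.toFun (A * B) := by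
  refine Submodule.mul_le.2 fun x hx y hy => ?_
  obtain ⟨F, hF, hF0, hFA, hxF⟩ := s.exists_fg_mem_apply_of_mem_starF hA hx
  obtain ⟨G, hG, hG0, hGB, hyG⟩ := s.exists_fg_mem_apply_of_mem_starF hB hy
  exact apply_le_starF _ (hF.mul hG) (by simp [Submodule.mul_eq_bot, hF0, hG0])
    (mul_le_mul' hFA hGB) (s.apply_mul_apply_le hF0 hG0 (Submodule.mul_mem_mul hxF hyG))

end SemistarOp

end FiniteType

section QuasiIdeals

variable {R K : Type*} [CommRing R] [Field K] [Algebra R K]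

theorem idealSub_mono {I J : Ideal R} (h : I ≤ J) : (idealSub I : Submodule R K) ≤ idealSub J :=
  Submodule.map_mono h

theorem idealSub_le_one (I : Ideal R) : (idealSub I : Submodule R K) ≤ 1 := by
  rw [Submodule.one_eq_range]
  exact LinearMap.map_le_range

theorem idealSub_ne_bot [FaithfulSMul R K] {I : Ideal R} (hI : I ≠ ⊥) :
    (idealSub I : Submodule R K) ≠ ⊥ := by
  obtain ⟨a, ha, ha0⟩ := (Submodule.ne_bot_iff I).1 hI
  exact (Submodule.ne_bot_iff _).2 ⟨_, Submodule.mem_map_of_mem ha,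
    (map_ne_zero_iff _ (FaithfulSMul.algebraMap_injective R K)).2 ha0⟩

theorem idealSub_mul (I J : Ideal R) :
    (idealSub (I * J) : Submodule R K) = idealSub I * idealSub J :=
  Submodule.map_mul I J (Algebra.ofId R K)

theorem exists_idealSub_le_of_fg_le_idealSub_sSup {c : Set (Ideal R)} (hc : c.Nonempty)
    (hdir : DirectedOn (· ≤ ·) c) {F : Submodule R K} (hF : F.FG)
    (hle : F ≤ idealSub (sSup c)) : ∃ J ∈ c, F ≤ idealSub J := by
  have hsup : (idealSub (sSup c) : Submodule R K) = sSup (idealSub '' c) := by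
    rw [sSup_image]
    exact (Submodule.gc_map_comap _).l_sSup
  obtain ⟨_, ⟨J, hJ, rfl⟩, hFJ⟩ :=
    (CompleteLattice.isCompactElement_iff_le_of_directed_sSup_le (k := F)).1
      ((Submodule.fg_iff_compact F).1 hF) _ (hc.image _)
      (hdir.mono_comp fun _ _ h => idealSub_mono h) (hsup ▸ hle)
  exact ⟨J, hJ, hFJ⟩

theorem Ideal.sSup_ne_top_of_directedOn {c : Set (Ideal R)} (hc : ∀ J ∈ c, J ≠ ⊤)
    (hne : c.Nonempty) (hdir : DirectedOn (· ≤ ·) c) : sSup c ≠ ⊤ := by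
  rw [Ne, Ideal.eq_top_iff_one, Submodule.mem_sSup_of_directed hne hdir]
  rintro ⟨J, hJ, h1⟩
  exact hc J hJ ((Ideal.eq_top_iff_one J).2 h1)

/-- `I ↦ I^⋆ ∩ R`; the quasi-`⋆`-ideals are exactly its nonzero fixed points. -/
def quasiClosure (f : Submodule R K → Submodule R K) (I : Ideal R) : Ideal R :=
  (f (idealSub I)).comap (Algebra.linearMap R K)

theorem quasiClosure_eq_top_iff {f : Submodule R K → Submodule R K} {I : Ideal R} :
    quasiClosure f I = ⊤ ↔ (1 : K) ∈ f (idealSub I) := by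
  simp [quasiClosure, Ideal.eq_top_iff_one]

theorem QuasiIdeal.one_notMem {f : Submodule R K → Submodule R K} {Q : Ideal R}
    (hQ : QuasiIdeal f Q) (hQt : Q ≠ ⊤) : (1 : K) ∉ f (idealSub Q) := by
  rwa [← quasiClosure_eq_top_iff, quasiClosure, hQ.2]

namespace SemistarOp

variable (s : SemistarOp R K)

theorem le_quasiClosure (I : Ideal R) : I ≤ quasiClosure (starF s.toFun) I :=
  fun _ ha => s.le_starF _ (Submodule.mem_map_of_mem ha)

theorem quasiIdeal_quasiClosure [FaithfulSMul R K] {I : Ideal R} (hI : I ≠ ⊥) :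
    QuasiIdeal (starF s.toFun) (quasiClosure (starF s.toFun) I) := by
  refine ⟨ne_bot_of_le_ne_bot hI (s.le_quasiClosure I),
    le_antisymm (Submodule.comap_mono ?_) (s.le_quasiClosure _)⟩
  calc starF s.toFun (idealSub (quasiClosure (starF s.toFun) I))
      ≤ starF s.toFun (starF s.toFun (idealSub I)) := starF_mono _ (Submodule.map_comap_le _ _)
    _ = starF s.toFun (idealSub I) := s.starF_starF (idealSub_ne_bot hI)

theorem quasiIdeal_sSup_of_directedOn [FaithfulSMul R K] {c : Set (Ideal R)}
    (hc : ∀ J ∈ c, QuasiIdeal (starF s.toFun) J) (hne : c.Nonempty)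
    (hdir : DirectedOn (· ≤ ·) c) : QuasiIdeal (starF s.toFun) (sSup c) := by
  obtain ⟨J₀, hJ₀⟩ := hne
  have hc0 : sSup c ≠ ⊥ := ne_bot_of_le_ne_bot (hc J₀ hJ₀).1 (le_sSup hJ₀)
  refine ⟨hc0, le_antisymm (fun a ha => ?_) (s.le_quasiClosure _)⟩
  obtain ⟨F, hF, hF0, hFc, haF⟩ := s.exists_fg_mem_apply_of_mem_starF (idealSub_ne_bot hc0) ha
  obtain ⟨J, hJ, hFJ⟩ := exists_idealSub_le_of_fg_le_idealSub_sSup ⟨J₀, hJ₀⟩ hdir hF hFc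
  have haJ : a ∈ quasiClosure (starF s.toFun) J := apply_le_starF _ hF hF0 hFJ haF
  exact le_sSup hJ ((hc J hJ).2 ▸ haJ)

theorem exists_quasiMax_le [FaithfulSMul R K] {I : Ideal R} (hI : I ≠ ⊥)
    (h1 : (1 : K) ∉ starF s.toFun (idealSub I)) :
    ∃ Q : Ideal R, QuasiMax (starF s.toFun) Q ∧ I ≤ Q := by
  let S := {J : Ideal R | QuasiIdeal (starF s.toFun) J ∧ J ≠ ⊤ ∧ I ≤ J}
  have hchain : ∀ c ⊆ S, IsChain (· ≤ ·) c → ∀ J ∈ c, ∃ U ∈ S, ∀ J' ∈ c, J' ≤ U :=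
    fun c hcS hc J hJ => ⟨sSup c,
      ⟨s.quasiIdeal_sSup_of_directedOn (fun J' hJ' => (hcS hJ').1) ⟨J, hJ⟩ hc.directedOn,
        Ideal.sSup_ne_top_of_directedOn (fun J' hJ' => (hcS hJ').2.1) ⟨J, hJ⟩ hc.directedOn,
        (hcS hJ).2.2.trans (le_sSup hJ)⟩,
      fun _ => le_sSup⟩
  obtain ⟨Q, -, hQ⟩ := zorn_le_nonempty₀ S hchain (quasiClosure (starF s.toFun) I)
    ⟨s.quasiIdeal_quasiClosure hI, quasiClosure_eq_top_iff.not.2 h1, s.le_quasiClosure I⟩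
  exact ⟨Q, ⟨hQ.1.1, hQ.1.2.1, fun J hJ hJt hQJ =>
    le_antisymm hQJ (hQ.2 ⟨hJ, hJt, hQ.1.2.2.trans hQJ⟩ hQJ)⟩, hQ.1.2.2⟩

end SemistarOp

theorem QuasiIdeal.starF_ne_apply_one {s : SemistarOp R K} {Q I : Ideal R}
    (hQ : QuasiIdeal (starF s.toFun) Q) (hQt : Q ≠ ⊤) (hIQ : I ≤ Q) :
    starF s.toFun (idealSub I) ≠ s.toFun 1 :=
  fun h => hQ.one_notMem hQt (starF_mono _ (idealSub_mono hIQ) (h ▸ s.one_mem_apply_one))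

variable [FaithfulSMul R K] {s : SemistarOp R K} {Q : Ideal R}

theorem QuasiMax.one_mem_starF_sup_span (hQ : QuasiMax (starF s.toFun) Q) {a : R} (ha : a ∉ Q) :
    (1 : K) ∈ starF s.toFun (idealSub (Q ⊔ Ideal.span {a})) := by
  by_contra h1
  have hQa : Q ⊔ Ideal.span {a} ≠ ⊥ := ne_bot_of_le_ne_bot hQ.1.1 le_sup_left
  have hQeq := hQ.2.2 _ (s.quasiIdeal_quasiClosure hQa) (quasiClosure_eq_top_iff.not.2 h1)
    (le_sup_left.trans (s.le_quasiClosure _))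
  exact ha (hQeq ▸ (le_sup_right.trans (s.le_quasiClosure _)) (Ideal.mem_span_singleton_self a))

/-- If `a, b ∉ Q` but `ab ∈ Q`, then `(Q + aR)(Q + bR) ⊆ Q`, while by maximality `1` lies in the
`⋆_f`-closure of both factors, hence in `Q^{⋆_f}`. -/
theorem QuasiMax.isPrime (hQ : QuasiMax (starF s.toFun) Q) : Q.IsPrime := by
  refine ⟨hQ.2.1, fun {a b} hab => ?_⟩
  by_contra! h
  have hmul : (Q ⊔ Ideal.span {a}) * (Q ⊔ Ideal.span {b}) ≤ Q := by
    rw [Submodule.sup_mul, Submodule.mul_sup, Submodule.mul_sup,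
      Ideal.span_singleton_mul_span_singleton]
    exact sup_le (sup_le Ideal.mul_le_right Ideal.mul_le_left)
      (sup_le Ideal.mul_le_right ((Ideal.span_singleton_le_iff_mem Q).2 hab))
  have h1 := s.starF_mul_starF_le
    (idealSub_ne_bot (ne_bot_of_le_ne_bot hQ.1.1 le_sup_left))
    (idealSub_ne_bot (ne_bot_of_le_ne_bot hQ.1.1 le_sup_left))
    (Submodule.mul_mem_mul (hQ.one_mem_starF_sup_span h.1) (hQ.one_mem_starF_sup_span h.2))
  rw [← idealSub_mul, mul_one] at h1
  exact hQ.1.one_notMem hQ.2.1 (starF_mono _ (idealSub_mono hmul) h1)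

theorem starF_idealSub_eq_apply_one_iff {I : Ideal R} (hI : I ≠ ⊥) :
    starF s.toFun (idealSub I) = s.toFun 1 ↔ ∀ Q, QuasiMax (starF s.toFun) Q → ¬ I ≤ Q := by
  refine ⟨fun h Q hQ hIQ => hQ.1.starF_ne_apply_one hQ.2.1 hIQ h, fun h => ?_⟩
  rw [s.starF_eq_apply_one_iff (idealSub_le_one I) (idealSub_ne_bot hI)]
  by_contra h1
  obtain ⟨Q, hQ, hIQ⟩ := s.exists_quasiMax_le hI h1
  exact h Q hQ hIQ

end QuasiIdeals

section Overring

variable {D K : Type*} [CommRing D] [Field K] [Algebra D K]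

theorem mem_adjoin_setOf_exists_mul_mem {A R : Type*} [CommRing A] [Algebra D A] [CommRing R]
    (B : Subalgebra D A) (M : Submonoid R) (φ : R →+* A) (hM : ∀ r ∈ M, φ r ∈ B) {x : A} :
    x ∈ Algebra.adjoin D {x | ∃ r ∈ M, φ r * x ∈ B} ↔ ∃ r ∈ M, φ r * x ∈ B := by
  let B' : Subalgebra D A :=
    { carrier := {x | ∃ r ∈ M, φ r * x ∈ B}
      mul_mem' := by
        rintro x y ⟨r, hr, hrx⟩ ⟨r', hr', hry⟩
        refine ⟨r * r', M.mul_mem hr hr', ?_⟩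
        rw [map_mul, mul_mul_mul_comm]
        exact B.mul_mem hrx hry
      add_mem' := by
        rintro x y ⟨r, hr, hrx⟩ ⟨r', hr', hry⟩
        refine ⟨r * r', M.mul_mem hr hr', ?_⟩
        have hsum : φ (r * r') * (x + y) = φ r' * (φ r * x) + φ r * (φ r' * y) := by
          rw [map_mul]; ring
        rw [hsum]
        exact B.add_mem (B.mul_mem (hM r' hr') hrx) (B.mul_mem (hM r hr) hry)
      algebraMap_mem' := fun d =>
        ⟨1, M.one_mem, by rw [map_one, one_mul]; exact B.algebraMap_mem d⟩ }
  exact ⟨fun hx => Algebra.adjoin_le (S := B') (fun _ h => h) hx,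
    fun hx => Algebra.subset_adjoin hx⟩

/-- The ideal `(D :_D xD)` of denominators of `x`. -/
def denominatorIdeal (D : Type*) {K : Type*} [CommRing D] [Field K] [Algebra D K] (x : K) :
    Ideal D :=
  Submodule.comap (LinearMap.toSpanSingleton D K x) (1 : Submodule D K)

theorem mem_denominatorIdeal {x : K} {r : D} :
    r ∈ denominatorIdeal D x ↔ algebraMap D K r * x ∈ (⊥ : Subalgebra D K) := by
  rw [denominatorIdeal, Submodule.mem_comap, LinearMap.toSpanSingleton_apply, Algebra.smul_def,
    ← Algebra.toSubmodule_bot]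
  rfl

theorem denominatorIdeal_ne_bot [IsFractionRing D K] (x : K) : denominatorIdeal D x ≠ ⊥ := by
  have := (algebraMap D K).domain_nontrivial
  obtain ⟨⟨a, d⟩, hx⟩ := IsLocalization.surj (nonZeroDivisors D) x
  refine (Submodule.ne_bot_iff _).2 ⟨d, mem_denominatorIdeal.2 (Algebra.mem_bot.2 ⟨a, ?_⟩),
    nonZeroDivisors.ne_zero d.2⟩
  rw [mul_comm]
  exact hx.symm

theorem mem_Dloc_iff_exists {P : Ideal D} (hP : P.IsPrime) {x : K} :
    x ∈ Dloc P ↔ ∃ r ∉ P, algebraMap D K r * x ∈ (⊥ : Subalgebra D K) :=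
  mem_adjoin_setOf_exists_mul_mem ⊥ P.primeCompl (algebraMap D K) fun r _ => algebraMap_mem _ r

theorem mem_Dloc_iff {P : Ideal D} (hP : P.IsPrime) {x : K} :
    x ∈ Dloc P ↔ ¬ denominatorIdeal D x ≤ P := by
  simp only [mem_Dloc_iff_exists hP, SetLike.not_le_iff_exists, mem_denominatorIdeal]
  exact exists_congr fun _ => and_comm

theorem Dloc_antitone {P P' : Ideal D} (hP : P.IsPrime) (hP' : P'.IsPrime) (h : P ≤ P') :
    Dloc (K := K) P' ≤ Dloc P :=
  fun _ hx => (mem_Dloc_iff hP).2 fun hle => (mem_Dloc_iff hP').1 hx (hle.trans h)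

variable {T : Subalgebra D K}

theorem mem_one_iff_mem_subalgebra {x : K} : x ∈ (1 : Submodule T K) ↔ x ∈ T := by
  rw [Submodule.mem_one]
  exact ⟨fun ⟨t, ht⟩ => ht ▸ t.2, fun hx => ⟨⟨x, hx⟩, rfl⟩⟩

theorem extT_idealSub (I : Ideal D) :
    extT T (idealSub I) = idealSub (I.map (algebraMap D T)) := by
  rw [extT, idealSub, idealSub, Ideal.map, Ideal.span, Submodule.map_span, Submodule.map_coe,
    Set.image_image]
  rfl

theorem extT_idealSub_le_one (I : Ideal D) : extT T (idealSub (K := K) I) ≤ 1 := by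
  rw [extT_idealSub]
  exact idealSub_le_one _

theorem map_algebraMap_ne_bot [IsFractionRing D K] {I : Ideal D} (hI : I ≠ ⊥) :
    I.map (algebraMap D T) ≠ ⊥ := by
  have hinj : Function.Injective (algebraMap T K ∘ algebraMap D T) := IsFractionRing.injective D K
  rwa [Ne, Ideal.map_eq_bot_iff_of_injective hinj.of_comp]

theorem mem_TlocQ_iff {Q : Ideal T} (hQ : Q.IsPrime) {x : K} :
    x ∈ TlocQ T Q ↔ ∃ t ∉ Q, (t : K) * x ∈ T :=
  mem_adjoin_setOf_exists_mul_mem T Q.primeCompl (algebraMap T K) fun t _ => t.2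

theorem le_TlocQ {Q : Ideal T} (hQ : Q.IsPrime) : T ≤ TlocQ T Q :=
  fun x hx => (mem_TlocQ_iff hQ).2 ⟨1, Q.primeCompl.one_mem, by simpa using hx⟩

theorem coe_locSub_one {Q : Ideal T} (hQ : Q.IsPrime) :
    (locSub Q (1 : Submodule T K) : Set K) = TlocQ T Q := by
  have hgen : {x : K | ∃ t : T, t ∉ Q ∧ algebraMap T K t * x ∈ (1 : Submodule T K)} =
      TlocQ T Q := by
    ext x
    simp only [Set.mem_ofPred_eq, mem_one_iff_mem_subalgebra, SetLike.mem_coe, mem_TlocQ_iff hQ]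
    rfl
  rw [locSub, hgen]
  refine subset_antisymm (fun x hx => ?_) Submodule.subset_span
  induction hx using Submodule.span_induction with
  | mem x h => exact h
  | zero => exact zero_mem _
  | add x y _ _ hx hy => exact add_mem hx hy
  | smul t x _ hx => exact mul_mem (le_TlocQ hQ t.2) hx

theorem Dloc_comap_le_TlocQ {Q : Ideal T} (hQ : Q.IsPrime) :
    Dloc (Q.comap (algebraMap D T)) ≤ TlocQ T Q := by
  intro x hx
  obtain ⟨r, hr, hrx⟩ := (mem_Dloc_iff_exists (hQ.comap _)).1 hx
  exact (mem_TlocQ_iff hQ).2 ⟨algebraMap D T r, hr, (bot_le : ⊥ ≤ T) hrx⟩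

/-- Writing `t = a/r` with `r ∉ P = Q ∩ D`, primality of `Q` forces `a ∉ P`,
so `t⁻¹ = r/a ∈ D_P`. -/
theorem TlocQ_le_Dloc_comap {Q : Ideal T} (hQ : Q.IsPrime)
    (hT : T ≤ Dloc (Q.comap (algebraMap D T))) : TlocQ T Q ≤ Dloc (Q.comap (algebraMap D T)) := by
  have hP : (Q.comap (algebraMap D T)).IsPrime := hQ.comap _
  intro y hy
  obtain ⟨t, htQ, hty⟩ := (mem_TlocQ_iff hQ).1 hy
  obtain ⟨r, hrP, hrt⟩ := (mem_Dloc_iff_exists hP).1 (hT t.2)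
  obtain ⟨a, ha⟩ := Algebra.mem_bot.1 hrt
  have haP : a ∉ Q.comap (algebraMap D T) := by
    intro haP
    have hat : algebraMap D T a = algebraMap D T r * t := Subtype.ext ha
    rw [Ideal.mem_comap, hat] at haP
    exact (hQ.mem_or_mem haP).elim hrP htQ
  have ht0 : (t : K) ≠ 0 := fun h => htQ (by rw [show t = 0 from Subtype.ext h]; exact Q.zero_mem)
  have htinv : (t : K)⁻¹ ∈ Dloc (Q.comap (algebraMap D T)) := by
    refine (mem_Dloc_iff_exists hP).2 ⟨a, haP, ?_⟩
    rw [ha, mul_assoc, mul_inv_cancel₀ ht0, mul_one]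
    exact algebraMap_mem _ r
  have hy : y = (t : K) * y * (t : K)⁻¹ := by field_simp
  rw [hy]
  exact mul_mem (hT hty) htinv

theorem Dloc_comap_eq_TlocQ_iff {Q : Ideal T} (hQ : Q.IsPrime) :
    Dloc (Q.comap (algebraMap D T)) = TlocQ T Q ↔ T ≤ Dloc (Q.comap (algebraMap D T)) :=
  ⟨fun h => h ▸ le_TlocQ hQ,
    fun hT => le_antisymm (Dloc_comap_le_TlocQ hQ) (TlocQ_le_Dloc_comap hQ hT)⟩

end Overring

section Flatness

variable {D K : Type*} [CommRing D] [Field K] [Algebra D K] {T : Subalgebra D K}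
  {s' : SemistarOp T K}

theorem forall_quasiPrime_Dloc_eq_TlocQ_iff (g : Submodule T K → Submodule T K) :
    (∀ Q : Ideal T, QuasiPrime (starF g) Q → Dloc (Q.comap (algebraMap D T)) = TlocQ T Q) ↔
      ∀ Q : Ideal T, QuasiPrime (starF g) Q → T ≤ Dloc (Q.comap (algebraMap D T)) :=
  forall₂_congr fun _ hQ => Dloc_comap_eq_TlocQ_iff hQ.2

theorem coe_tildeOp_one :
    (tildeOp s'.toFun (1 : Submodule T K) : Set K) =
      ⋂ Q : {Q : Ideal T // QuasiMax (starF s'.toFun) Q}, (TlocQ T Q : Set K) := by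
  rw [tildeOp, Submodule.coe_iInf, Set.iInter_subtype]
  refine Set.iInter_congr fun Q => ?_
  rw [Submodule.coe_iInf]
  exact Set.iInter_congr fun hQ => coe_locSub_one hQ.isPrime

theorem le_tildeOp_one : (T : Set K) ⊆ tildeOp s'.toFun (1 : Submodule T K) := by
  rw [coe_tildeOp_one]
  exact Set.subset_iInter fun Q => le_TlocQ Q.2.isPrime

theorem starF_extT_denominatorIdeal_eq [IsFractionRing D K]
    (hT : ∀ Q : Ideal T, QuasiMax (starF s'.toFun) Q → T ≤ Dloc (Q.comap (algebraMap D T)))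
    {x : K} (hx : x ∈ T) :
    starF s'.toFun (extT T (idealSub (denominatorIdeal D x))) = s'.toFun 1 := by
  rw [extT_idealSub, starF_idealSub_eq_apply_one_iff
    (map_algebraMap_ne_bot (denominatorIdeal_ne_bot x))]
  intro Q hQ hle
  exact (mem_Dloc_iff (hQ.isPrime.comap _)).1 (hT Q hQ hx) (Ideal.map_le_iff_le_comap.1 hle)

theorem starF_extT_eq_or_le_Dloc_of_denominatorIdeal
    (h : ∀ x ∈ T, x ≠ 0 → starF s'.toFun (extT T (idealSub (denominatorIdeal D x))) = s'.toFun 1)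
    {P : Ideal D} (hP : P.IsPrime) :
    starF s'.toFun (extT T (idealSub P)) = s'.toFun 1 ∨ T ≤ Dloc P := by
  by_cases hden : ∃ x ∈ T, x ≠ 0 ∧ denominatorIdeal D x ≤ P
  · obtain ⟨x, hx, hx0, hxP⟩ := hden
    refine Or.inl (le_antisymm (s'.starF_le_apply_one (extT_idealSub_le_one P)) ?_)
    rw [← h x hx hx0]
    exact starF_mono _ (Submodule.span_mono (idealSub_mono hxP))
  · push Not at hden
    refine Or.inr fun x hx => ?_
    rcases eq_or_ne x 0 with rfl | hx0
    · exact zero_mem _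
    · exact (mem_Dloc_iff hP).2 (hden x hx hx0)

theorem le_Dloc_comap_of_quasiPrime
    (h : ∀ P : Ideal D, P.IsPrime →
      starF s'.toFun (extT T (idealSub P)) = s'.toFun 1 ∨ T ≤ Dloc P)
    {Q : Ideal T} (hQ : QuasiPrime (starF s'.toFun) Q) :
    T ≤ Dloc (Q.comap (algebraMap D T)) := by
  refine (h _ (hQ.2.comap _)).resolve_left ?_
  rw [extT_idealSub]
  exact hQ.1.starF_ne_apply_one hQ.2.ne_top Ideal.map_comap_le

theorem coe_tildeOp_one_eq_iInter_Dloc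
    (hT : ∀ Q : Ideal T, QuasiPrime (starF s'.toFun) Q →
      Dloc (Q.comap (algebraMap D T)) = TlocQ T Q) :
    (tildeOp s'.toFun (1 : Submodule T K) : Set K) =
      ⋂ Q : {Q : Ideal T // QuasiMax (starF s'.toFun) Q},
        ((Dloc ((Q : Ideal T).comap (algebraMap D T)) : Subalgebra D K) : Set K) := by
  rw [coe_tildeOp_one]
  exact Set.iInter_congr fun Q => by rw [hT Q ⟨Q.2.1, Q.2.isPrime⟩]

theorem starF_extT_eq_or_le_Dloc_of_tildeOp [IsFractionRing D K]
    (h : (tildeOp s'.toFun (1 : Submodule T K) : Set K) =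
      ⋂ Q : {Q : Ideal T // QuasiMax (starF s'.toFun) Q},
        ((Dloc ((Q : Ideal T).comap (algebraMap D T)) : Subalgebra D K) : Set K))
    {P : Ideal D} (hP : P.IsPrime) :
    starF s'.toFun (extT T (idealSub P)) = s'.toFun 1 ∨ T ≤ Dloc P := by
  rcases eq_or_ne P ⊥ with rfl | hP0
  · exact Or.inr fun x _ =>
      (mem_Dloc_iff hP).2 fun hle => denominatorIdeal_ne_bot x (le_bot_iff.1 hle)
  rw [or_iff_not_imp_left, extT_idealSub,
    starF_idealSub_eq_apply_one_iff (map_algebraMap_ne_bot hP0)]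
  push Not
  rintro ⟨Q, hQ, hPQ⟩ x hx
  have hxQ : x ∈ Dloc (Q.comap (algebraMap D T)) := by
    have hx' := le_tildeOp_one (s' := s') hx
    rw [h] at hx'
    exact Set.mem_iInter.1 hx' ⟨Q, hQ⟩
  exact Dloc_antitone hP (hQ.isPrime.comap _) (Ideal.map_le_iff_le_comap.1 hPQ) hxQ

end Flatness

theorem flat_tfae_general
    {D K : Type*} [CommRing D] [Field K] [Algebra D K] [IsFractionRing D K]
    (T : Subalgebra D K) (s : SemistarOp D K) (s' : SemistarOp ↥T K) :
    List.TFAE [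
      -- (i) T is (⋆,⋆')-flat over D
      FlatF s.toFun T s'.toFun,
      -- (ii) T is (⋆,⋆')-linked to D and, for each prime P of D,
      --      (PT)^{⋆'_f} = T^{⋆'} or T ⊆ D_P
      LinkedF s.toFun T s'.toFun ∧
        ∀ P : Ideal D, P.IsPrime →
          (starF s'.toFun (extT T (idealSub P)) = s'.toFun 1 ∨ T ≤ Dloc P),
      -- (iii) T is (⋆,⋆')-linked to D and ((D :_D xD)T)^{⋆'_f} = T^{⋆'} for 0 ≠ x ∈ T
      LinkedF s.toFun T s'.toFun ∧
        ∀ x : K, x ∈ T → x ≠ 0 →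
          starF s'.toFun (extT T (idealSub
            (Submodule.comap (LinearMap.toSpanSingleton D K x) (1 : Submodule D K)))) =
          s'.toFun 1,
      -- (iv) T is (⋆,⋆')-linked to D and T^{⋆̃'} = ∩ {D_{Q∩D} : Q ∈ M(⋆'_f)}
      LinkedF s.toFun T s'.toFun ∧
        ((tildeOp s'.toFun (1 : Submodule ↥T K) : Submodule ↥T K) : Set K) =
          ⋂ Q : {Q : Ideal ↥T // QuasiMax (starF s'.toFun) Q},
            ((Dloc ((Q : Ideal ↥T).comap (algebraMap D ↥T)) : Subalgebra D K) : Set K)] := by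
  tfae_have 1 → 3 := fun ⟨hlink, hflat⟩ => ⟨hlink, fun _ hx _ =>
    starF_extT_denominatorIdeal_eq (fun Q hQ =>
      (forall_quasiPrime_Dloc_eq_TlocQ_iff _).1 hflat Q ⟨hQ.1, hQ.isPrime⟩) hx⟩
  tfae_have 3 → 2 := fun ⟨hlink, h⟩ =>
    ⟨hlink, fun _ hP => starF_extT_eq_or_le_Dloc_of_denominatorIdeal h hP⟩
  tfae_have 2 → 1 := fun ⟨hlink, h⟩ =>
    ⟨hlink, (forall_quasiPrime_Dloc_eq_TlocQ_iff _).2 fun _ => le_Dloc_comap_of_quasiPrime h⟩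
  tfae_have 1 → 4 := fun ⟨hlink, hflat⟩ => ⟨hlink, coe_tildeOp_one_eq_iInter_Dloc hflat⟩
  tfae_have 4 → 2 := fun ⟨hlink, h⟩ =>
    ⟨hlink, fun _ hP => starF_extT_eq_or_le_Dloc_of_tildeOp h hP⟩
  tfae_finish

/-- **Proposition 4.4 (i)–(iv).** Characterizations of semistar flatness. -/
theorem flat_tfae
    {D K : Type*} [CommRing D] [IsDomain D] [Field K] [Algebra D K] [IsFractionRing D K]
    (T : Subalgebra D K) (s : SemistarOp D K) (s' : SemistarOp ↥T K) :
    List.TFAE [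
      -- (i) T is (⋆,⋆')-flat over D
      FlatF s.toFun T s'.toFun,
      -- (ii) T is (⋆,⋆')-linked to D and, for each prime P of D,
      --      (PT)^{⋆'_f} = T^{⋆'} or T ⊆ D_P
      LinkedF s.toFun T s'.toFun ∧
        ∀ P : Ideal D, P.IsPrime →
          (starF s'.toFun (extT T (idealSub P)) = s'.toFun 1 ∨ T ≤ Dloc P),
      -- (iii) T is (⋆,⋆')-linked to D and ((D :_D xD)T)^{⋆'_f} = T^{⋆'} for 0 ≠ x ∈ T
      LinkedF s.toFun T s'.toFun ∧
        ∀ x : K, x ∈ T → x ≠ 0 →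
          starF s'.toFun (extT T (idealSub
            (Submodule.comap (LinearMap.toSpanSingleton D K x) (1 : Submodule D K)))) =
          s'.toFun 1,
      -- (iv) T is (⋆,⋆')-linked to D and T^{⋆̃'} = ∩ {D_{Q∩D} : Q ∈ M(⋆'_f)}
      LinkedF s.toFun T s'.toFun ∧
        ((tildeOp s'.toFun (1 : Submodule ↥T K) : Submodule ↥T K) : Set K) =
          ⋂ Q : {Q : Ideal ↥T // QuasiMax (starF s'.toFun) Q},
            ((Dloc ((Q : Ideal ↥T).comap (algebraMap D ↥T)) : Subalgebra D K) : Set K)] :=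
  flat_tfae_general T s s'
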